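/- Suppose observed probabilities over two binary take-up outcomes satisfy p₀₀ = q₀₀, p₀₁ = λ·q₁₀, p₁₀ = (1−λ)·q₁₀, p₁₁ = q₁₁ for unknowns q₀₀, q₁₀, q₁₁ ≥ 0 summing to 1 and λ ∈ [0,1]. If p₀₁ + p₁₀ > 0, then the solution (q₀₀, q₁₀, q₁₁, λ) is unique: q₀₀ = p₀₀, q₁₀ = p₀₁ + p₁₀, q₁₁ = p₁₁, λ = p₀₁/(p₀₁ + p₁₀). -/
import Mathlib


/-- Point identification in the Kline–Tamer restricted sub-simplex: if
p₀₁ + p₁₀ > 0, the latent probabilities and the selection probability are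
uniquely determined by the observed probabilities. -/
theorem stmt_18 (p00 p01 p10 p11 q00 q10 q11 lam : ℝ)
    (hq00 : 0 ≤ q00) (hq10 : 0 ≤ q10) (hq11 : 0 ≤ q11)
    (hqsum : q00 + q10 + q11 = 1)
    (hlam0 : 0 ≤ lam) (hlam1 : lam ≤ 1)
    (h00 : p00 = q00) (h01 : p01 = lam * q10)
    (h10 : p10 = (1 - lam) * q10) (h11 : p11 = q11)
    (hpos : 0 < p01 + p10) :
    q00 = p00 ∧ q10 = p01 + p10 ∧ q11 = p11 ∧ lam = p01 / (p01 + p10) := by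
  have hsum : p01 + p10 = q10 := by rw [h01, h10]; ring
  refine ⟨h00.symm, hsum.symm, h11.symm, ?_⟩
  have hq : q10 ≠ 0 := by nlinarith [hsum ▸ hpos]
  rw [hsum, h01, mul_div_assoc, div_self hq, mul_one]
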